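/- Let h be a finite dimensional Leibniz algebra with basis {e_1,…,e_n}. The map γ̄ : U(G(A(h)°)) → Aut_Lbz(h), sending an invertible group-like element θ of the finite dual of A(h) (equivalently, a convolution-invertible algebra homomorphism θ : A(h) → k) to the automorphism γ̄(θ)(e_i) = Σ_s θ(x_{si}) e_s, is a group isomorphism between the group of convolution-invertible algebra characters of A(h) and the automorphism group of the Leibniz algebra h. -/
import Mathlib


open TensorProduct MvPolynomial

/-- The universal polynomial `P_{(a,i,j)} = Σ_u β^u_{ij} X_{au} - Σ_{s,t} τ^a_{st} X_{si} X_{tj}`. -/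
noncomputable def univPoly {k : Type*} [Field k] {n : ℕ} {I : Type*}
    (τ : Fin n → Fin n → Fin n → k) (β : I → I → I →₀ k)
    (a : Fin n) (i j : I) : MvPolynomial (Fin n × I) k :=
  (β i j).sum (fun u c => C c * X (a, u)) -
    ∑ s : Fin n, ∑ t : Fin n, C (τ s t a) * X (s, i) * X (t, j)

/-- The ideal generated by the universal polynomials. -/
noncomputable def univIdeal {k : Type*} [Field k] {n : ℕ} {I : Type*}
    (τ : Fin n → Fin n → Fin n → k) (β : I → I → I →₀ k) :
    Ideal (MvPolynomial (Fin n × I) k) :=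
  Ideal.span (Set.range fun p : Fin n × I × I => univPoly τ β p.1 p.2.1 p.2.2)

/-- The universal algebra `A(h,g)`. -/
noncomputable abbrev univAlg {k : Type*} [Field k] {n : ℕ} {I : Type*}
    (τ : Fin n → Fin n → Fin n → k) (β : I → I → I →₀ k) :=
  MvPolynomial (Fin n × I) k ⧸ univIdeal τ β

/-- The generator `x_{si}` of `A(h,g)`. -/
noncomputable def univGen {k : Type*} [Field k] {n : ℕ} {I : Type*}
    (τ : Fin n → Fin n → Fin n → k) (β : I → I → I →₀ k)
    (s : Fin n) (i : I) : univAlg τ β :=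
  Ideal.Quotient.mk (univIdeal τ β) (X (s, i))

/-- The universal ideal of a single `n`-dimensional Leibniz algebra `h`
(with structure constants `τ`), inside `M(n) = k[X_{ij}]`. -/
noncomputable abbrev univIdealH {k : Type*} [Field k] {n : ℕ}
    (τ : Fin n → Fin n → Fin n → k) : Ideal (MvPolynomial (Fin n × Fin n) k) :=
  univIdeal τ (fun i j => Finsupp.equivFunOnFinite.symm (τ i j))

/-- The universal algebra `A(h) = A(h,h)` of an `n`-dimensional Leibniz algebra. -/
noncomputable abbrev univAlgH {k : Type*} [Field k] {n : ℕ}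
    (τ : Fin n → Fin n → Fin n → k) :=
  univAlg τ (fun i j => Finsupp.equivFunOnFinite.symm (τ i j))

/-- The generator `x_{ij}` of `A(h)`. -/
noncomputable abbrev univGenH {k : Type*} [Field k] {n : ℕ}
    (τ : Fin n → Fin n → Fin n → k) (i j : Fin n) : univAlgH τ :=
  univGen τ (fun i j => Finsupp.equivFunOnFinite.symm (τ i j)) i j

/-- The comultiplication of the matrix bialgebra `M(n) = k[X_{ij}]`:
`Δ(X_{ij}) = Σ_s X_{is} ⊗ X_{sj}`. -/
noncomputable def deltaM (k : Type*) [Field k] (n : ℕ) :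
    MvPolynomial (Fin n × Fin n) k →ₐ[k]
      MvPolynomial (Fin n × Fin n) k ⊗[k] MvPolynomial (Fin n × Fin n) k :=
  MvPolynomial.aeval (fun p : Fin n × Fin n =>
    ∑ s : Fin n, MvPolynomial.X (p.1, s) ⊗ₜ[k] MvPolynomial.X (s, p.2))

/-- The counit of the matrix bialgebra `M(n)`: `ε(X_{ij}) = δ_{ij}`. -/
noncomputable def epsM (k : Type*) [Field k] (n : ℕ) :
    MvPolynomial (Fin n × Fin n) k →ₐ[k] k :=
  MvPolynomial.aeval (fun p : Fin n × Fin n => if p.1 = p.2 then 1 else 0)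

/-- The map `γ` sending a character `θ : A(h) → k` to the endomorphism
`γ(θ)(e_i) = Σ_s θ(x_{si}) e_s` of `h = k^n`, i.e. `γ(θ) = (Id ⊗ θ) ∘ η_h` followed
by the canonical isomorphism `h ⊗ k ≅ h`. -/
noncomputable def gammaMap {k : Type*} [Field k] {n : ℕ}
    {τ : Fin n → Fin n → Fin n → k}
    (η : (Fin n → k) →ₗ[k] (Fin n → k) ⊗[k] univAlgH τ)
    (θ : univAlgH τ →ₐ[k] k) : (Fin n → k) →ₗ[k] (Fin n → k) :=
  (TensorProduct.rid k (Fin n → k)).toLinearMap ∘ₗ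
    TensorProduct.map LinearMap.id θ.toLinearMap ∘ₗ η

/-- The convolution product of two linear functionals on `A(h)`, with respect to the
comultiplication `Δ_A`. -/
noncomputable def convMap {k : Type*} [Field k] {n : ℕ}
    {τ : Fin n → Fin n → Fin n → k}
    (ΔA : univAlgH τ →ₐ[k] univAlgH τ ⊗[k] univAlgH τ)
    (θ₁ θ₂ : univAlgH τ →ₗ[k] k) : univAlgH τ →ₗ[k] k :=
  LinearMap.mul' k k ∘ₗ TensorProduct.map θ₁ θ₂ ∘ₗ ΔA.toLinearMap

/-- A character `θ` of `A(h)` is convolution-invertible (an invertible group-like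
element of the finite dual `A(h)°`) if it has a convolution inverse which is again a
character. -/
noncomputable def ConvInvertible {k : Type*} [Field k] {n : ℕ}
    {τ : Fin n → Fin n → Fin n → k}
    (ΔA : univAlgH τ →ₐ[k] univAlgH τ ⊗[k] univAlgH τ) (εA : univAlgH τ →ₐ[k] k)
    (θ : univAlgH τ →ₐ[k] k) : Prop :=
  ∃ θ' : univAlgH τ →ₐ[k] k,
    convMap ΔA θ.toLinearMap θ'.toLinearMap = εA.toLinearMap ∧
    convMap ΔA θ'.toLinearMap θ.toLinearMap = εA.toLinearMap

section Aux

variable {k : Type*} [Field k] {n : ℕ} {τ : Fin n → Fin n → Fin n → k}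

lemma evalUnivPoly (G : MvPolynomial (Fin n × Fin n) k →ₐ[k] k) (a i j : Fin n) :
    G (univPoly τ (fun i j => Finsupp.equivFunOnFinite.symm (τ i j)) a i j) =
      (∑ u, τ i j u * G (X (a, u))) -
        ∑ s, ∑ t, τ s t a * G (X (s, i)) * G (X (t, j)) := by
  rw [univPoly, map_sub, map_finsuppSum, Finsupp.sum_fintype]
  · simp [Algebra.smul_def, mul_assoc]
  · intro u; simp

lemma quot_ext {B : Type*} [Semiring B] [Algebra k B] {f g : univAlgH τ →ₐ[k] B}
    (h : ∀ s i, f (univGenH τ s i) = g (univGenH τ s i)) : f = g := by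
  refine Ideal.Quotient.algHom_ext k (MvPolynomial.algHom_ext fun p => ?_)
  exact h p.1 p.2

lemma char_rel (θ : univAlgH τ →ₐ[k] k) (a i j : Fin n) :
    ∑ u, τ i j u * θ (univGenH τ a u) =
      ∑ s, ∑ t, τ s t a * θ (univGenH τ s i) * θ (univGenH τ t j) := by
  have hmem : univPoly τ (fun i j => Finsupp.equivFunOnFinite.symm (τ i j)) a i j ∈
      univIdealH τ := Ideal.subset_span ⟨(a, i, j), rfl⟩
  have h0 : (θ.comp (Ideal.Quotient.mkₐ k (univIdealH τ)))
      (univPoly τ (fun i j => Finsupp.equivFunOnFinite.symm (τ i j)) a i j) = 0 := by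
    have : (Ideal.Quotient.mkₐ k (univIdealH τ))
        (univPoly τ (fun i j => Finsupp.equivFunOnFinite.symm (τ i j)) a i j) = 0 :=
      Ideal.Quotient.eq_zero_iff_mem.mpr hmem
    simp [AlgHom.comp_apply, this]
  rw [evalUnivPoly (θ.comp (Ideal.Quotient.mkₐ k (univIdealH τ))) a i j] at h0
  have hg : ∀ s t : Fin n, (θ.comp (Ideal.Quotient.mkₐ k (univIdealH τ))) (X (s, t)) =
      θ (univGenH τ s t) := fun s t => rfl
  simp only [hg] at h0
  exact sub_eq_zero.mp h0

/-- The character attached to a matrix satisfying the universal relations. -/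
noncomputable def charOf (m : Fin n → Fin n → k)
    (hm : ∀ a i j, ∑ u, τ i j u * m a u = ∑ s, ∑ t, τ s t a * m s i * m t j) :
    univAlgH τ →ₐ[k] k :=
  Ideal.Quotient.liftₐ (univIdealH τ)
    (aeval fun p : Fin n × Fin n => m p.1 p.2)
    (by
      intro x hx
      rw [univIdealH, univIdeal] at hx
      refine Submodule.span_induction ?_ ?_ ?_ ?_ hx
      · rintro _ ⟨⟨a, i, j⟩, rfl⟩
        rw [evalUnivPoly (aeval fun p : Fin n × Fin n => m p.1 p.2) a i j]
        simp only [aeval_X]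
        rw [sub_eq_zero]
        exact hm a i j
      · simp
      · intro x y _ _ hx hy; rw [map_add, hx, hy, add_zero]
      · intro c x _ hx
        rw [smul_eq_mul, map_mul, hx, mul_zero])

lemma charOf_gen (m : Fin n → Fin n → k)
    (hm : ∀ a i j, ∑ u, τ i j u * m a u = ∑ s, ∑ t, τ s t a * m s i * m t j)
    (s i : Fin n) : charOf m hm (univGenH τ s i) = m s i := by
  simp [charOf, univGenH, univGen, Ideal.Quotient.liftₐ_apply]

lemma pi_single_expand (f : Fin n → k) :
    f = ∑ u, f u • (Pi.single u 1 : Fin n → k) := by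
  funext s; simp [Finset.sum_apply, Pi.single_apply]

end Aux

/-- `γ̄ : U(G(A(h)°)) → Aut_Lbz(h)`, `γ̄(θ)(e_i) = Σ_s θ(x_{si}) e_s`,
is a group isomorphism from the group of convolution-invertible characters of `A(h)`
onto the automorphism group of the Leibniz algebra `h`: it is given by the stated
formula, every convolution-invertible character yields a Leibniz algebra automorphism,
every Leibniz algebra automorphism arises from a unique convolution-invertible
character, and the map sends convolution to composition and the unit `ε` to the
identity. -/
theorem stmt_15 (k : Type*) [Field k] (n : ℕ) (τ : Fin n → Fin n → Fin n → k)
    (bH : (Fin n → k) →ₗ[k] (Fin n → k) →ₗ[k] (Fin n → k))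
    (hbH : ∀ i j : Fin n, bH (Pi.single i 1) (Pi.single j 1) = fun s => τ i j s)
    (hLH : ∀ x y z, bH x (bH y z) = bH (bH x y) z - bH (bH x z) y)
    (ΔA : univAlgH τ →ₐ[k] univAlgH τ ⊗[k] univAlgH τ) (εA : univAlgH τ →ₐ[k] k)
    (hΔ : ∀ i j : Fin n, ΔA (univGenH τ i j) =
      ∑ s : Fin n, univGenH τ i s ⊗ₜ[k] univGenH τ s j)
    (hε : ∀ i j : Fin n, εA (univGenH τ i j) = if i = j then 1 else 0)
    (η : (Fin n → k) →ₗ[k] (Fin n → k) ⊗[k] univAlgH τ)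
    (hη : ∀ i : Fin n, η (Pi.single i 1) =
      ∑ s : Fin n, Pi.single s 1 ⊗ₜ[k] univGenH τ s i) :
    (∀ (θ : univAlgH τ →ₐ[k] k) (i : Fin n), gammaMap η θ (Pi.single i 1) =
      ∑ s : Fin n, θ (univGenH τ s i) • (Pi.single s 1 : Fin n → k)) ∧
    (∀ θ : univAlgH τ →ₐ[k] k, ConvInvertible ΔA εA θ →
      Function.Bijective (gammaMap η θ) ∧
        ∀ u v : Fin n → k, gammaMap η θ (bH u v) = bH (gammaMap η θ u) (gammaMap η θ v)) ∧
    (∀ w : (Fin n → k) →ₗ[k] (Fin n → k), Function.Bijective w →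
      (∀ u v : Fin n → k, w (bH u v) = bH (w u) (w v)) →
        ∃! θ : univAlgH τ →ₐ[k] k, ConvInvertible ΔA εA θ ∧ gammaMap η θ = w) ∧
    (∀ θ₁ θ₂ θ₃ : univAlgH τ →ₐ[k] k,
      θ₃.toLinearMap = convMap ΔA θ₁.toLinearMap θ₂.toLinearMap →
        gammaMap η θ₃ = gammaMap η θ₁ ∘ₗ gammaMap η θ₂) ∧
    gammaMap η εA = LinearMap.id := by
  classical
  -- Part 1: the formula for γ on basis vectors.
  have part1 : ∀ (θ : univAlgH τ →ₐ[k] k) (i : Fin n), gammaMap η θ (Pi.single i 1) =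
      ∑ s : Fin n, θ (univGenH τ s i) • (Pi.single s 1 : Fin n → k) := by
    intro θ i
    have h0 : gammaMap η θ (Pi.single i 1) =
        (TensorProduct.rid k (Fin n → k)).toLinearMap
          (TensorProduct.map LinearMap.id θ.toLinearMap (η (Pi.single i 1))) := rfl
    rw [h0, hη i, map_sum, map_sum]
    simp [TensorProduct.map_tmul, TensorProduct.rid_tmul]
  have gcoord : ∀ (θ : univAlgH τ →ₐ[k] k) (a i : Fin n),
      gammaMap η θ (Pi.single i 1) a = θ (univGenH τ a i) := by
    intro θ a i
    rw [part1]
    simp [Finset.sum_apply, Pi.single_apply]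
  have lin_apply : ∀ (w' : (Fin n → k) →ₗ[k] (Fin n → k)) (f : Fin n → k) (a : Fin n),
      w' f a = ∑ u, f u * w' (Pi.single u 1) a := by
    intro w' f a
    conv_lhs => rw [pi_single_expand f]
    rw [map_sum, Finset.sum_apply]
    simp
  have bH_coord : ∀ (u v : Fin n → k) (a : Fin n),
      bH u v a = ∑ s, ∑ t, u s * v t * τ s t a := by
    intro u v a
    conv_lhs => rw [pi_single_expand u, pi_single_expand v]
    simp only [map_sum, map_smul, LinearMap.sum_apply, LinearMap.smul_apply,
      Finset.sum_apply, Pi.smul_apply, smul_eq_mul, hbH]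
    simp only [Finset.mul_sum]
    rw [Finset.sum_comm]
    refine Finset.sum_congr rfl fun s _ => Finset.sum_congr rfl fun t _ => by ring
  -- convolution value on generators
  have conv_gen : ∀ (θ₁ θ₂ : univAlgH τ →ₗ[k] k) (i j : Fin n),
      convMap ΔA θ₁ θ₂ (univGenH τ i j) =
        ∑ t, θ₁ (univGenH τ i t) * θ₂ (univGenH τ t j) := by
    intro θ₁ θ₂ i j
    simp [convMap, hΔ i j, map_sum, LinearMap.mul'_apply]
  -- Part 4: γ sends convolution to composition.
  have part4 : ∀ θ₁ θ₂ θ₃ : univAlgH τ →ₐ[k] k,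
      θ₃.toLinearMap = convMap ΔA θ₁.toLinearMap θ₂.toLinearMap →
      gammaMap η θ₃ = gammaMap η θ₁ ∘ₗ gammaMap η θ₂ := by
    intro θ₁ θ₂ θ₃ h
    have hθ₃ : ∀ s i, θ₃ (univGenH τ s i) =
        ∑ t, θ₁ (univGenH τ s t) * θ₂ (univGenH τ t i) := by
      intro s i
      have := LinearMap.congr_fun h (univGenH τ s i)
      rw [conv_gen] at this
      exact this
    refine Module.Basis.ext (Pi.basisFun k (Fin n)) fun i => ?_
    rw [Pi.basisFun_apply, LinearMap.comp_apply, part1 θ₂ i, map_sum]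
    funext a
    rw [Finset.sum_apply, gcoord, hθ₃]
    refine Finset.sum_congr rfl fun t _ => ?_
    rw [map_smul, Pi.smul_apply, gcoord, smul_eq_mul, mul_comm]
  -- Part 5: γ(ε) = id.
  have part5 : gammaMap η εA = LinearMap.id := by
    refine Module.Basis.ext (Pi.basisFun k (Fin n)) fun i => ?_
    rw [Pi.basisFun_apply, part1, LinearMap.id_apply]
    simp [hε, ite_smul]
  -- every character gives a bH-morphism
  have hom : ∀ (θ : univAlgH τ →ₐ[k] k) (u v : Fin n → k),
      gammaMap η θ (bH u v) = bH (gammaMap η θ u) (gammaMap η θ v) := by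
    intro θ
    have key : ∀ i j, gammaMap η θ (bH (Pi.single i 1) (Pi.single j 1)) =
        bH (gammaMap η θ (Pi.single i 1)) (gammaMap η θ (Pi.single j 1)) := by
      intro i j
      funext a
      rw [lin_apply _ _ a, bH_coord, hbH i j]
      simp only [gcoord]
      rw [char_rel θ a i j]
      refine Finset.sum_congr rfl fun s _ => Finset.sum_congr rfl fun t _ => by ring
    intro u v
    have hB : (bH.compr₂ (gammaMap η θ)) =
        ((bH.compl₂ (gammaMap η θ)).comp (gammaMap η θ)) := by
      refine LinearMap.ext_basis (Pi.basisFun k (Fin n)) (Pi.basisFun k (Fin n))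
        fun i j => ?_
      simpa [LinearMap.compr₂_apply, LinearMap.compl₂_apply, Pi.basisFun_apply]
        using key i j
    simpa [LinearMap.compr₂_apply, LinearMap.compl₂_apply]
      using LinearMap.congr_fun₂ hB u v
  -- Part 2
  have part2 : ∀ θ : univAlgH τ →ₐ[k] k, ConvInvertible ΔA εA θ →
      Function.Bijective (gammaMap η θ) ∧
        ∀ u v : Fin n → k, gammaMap η θ (bH u v) =
          bH (gammaMap η θ u) (gammaMap η θ v) := by
    rintro θ ⟨θ', h1, h2⟩
    refine ⟨?_, hom θ⟩
    have e1 := part4 θ θ' εA h1.symm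
    have e2 := part4 θ' θ εA h2.symm
    rw [part5] at e1 e2
    exact Function.bijective_iff_has_inverse.mpr ⟨gammaMap η θ',
      fun x => (LinearMap.congr_fun e2 x).symm,
      fun x => (LinearMap.congr_fun e1 x).symm⟩
  -- Part 3
  have part3 : ∀ w : (Fin n → k) →ₗ[k] (Fin n → k), Function.Bijective w →
      (∀ u v : Fin n → k, w (bH u v) = bH (w u) (w v)) →
      ∃! θ : univAlgH τ →ₐ[k] k, ConvInvertible ΔA εA θ ∧ gammaMap η θ = w := by
    intro w hwb hwh
    have hrel : ∀ (w' : (Fin n → k) →ₗ[k] (Fin n → k)),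
        (∀ u v, w' (bH u v) = bH (w' u) (w' v)) → ∀ a i j : Fin n,
        ∑ u, τ i j u * w' (Pi.single u 1) a =
          ∑ s, ∑ t, τ s t a * w' (Pi.single i 1) s * w' (Pi.single j 1) t := by
      intro w' hw a i j
      have h := congrFun (hw (Pi.single i 1) (Pi.single j 1)) a
      rw [hbH i j, lin_apply w' _ a, bH_coord] at h
      rw [h]
      refine Finset.sum_congr rfl fun s _ => Finset.sum_congr rfl fun t _ => by ring
    set W := LinearEquiv.ofBijective w hwb with hW
    have hwapp : ∀ x, W x = w x := fun x => rfl
    set winv : (Fin n → k) →ₗ[k] (Fin n → k) := W.symm.toLinearMap with hwinv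
    have hwl : ∀ x, winv (w x) = x := fun x => W.symm_apply_apply x
    have hwr : ∀ x, w (winv x) = x := fun x => W.apply_symm_apply x
    have hwinvh : ∀ u v, winv (bH u v) = bH (winv u) (winv v) := by
      intro u v
      apply hwb.injective
      rw [hwr, hwh, hwr, hwr]
    have hm := hrel w hwh
    have hm' := hrel winv hwinvh
    set θ : univAlgH τ →ₐ[k] k :=
      charOf (fun a u => w (Pi.single u 1) a) hm with hθdef
    set θ' : univAlgH τ →ₐ[k] k :=
      charOf (fun a u => winv (Pi.single u 1) a) hm' with hθ'def
    have hθg : ∀ s i, θ (univGenH τ s i) = w (Pi.single i 1) s :=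
      fun s i => charOf_gen _ hm s i
    have hθ'g : ∀ s i, θ' (univGenH τ s i) = winv (Pi.single i 1) s :=
      fun s i => charOf_gen _ hm' s i
    have hconv : ∀ (θ₁ θ₂ : univAlgH τ →ₐ[k] k),
        (∀ i j, ∑ t, θ₁ (univGenH τ i t) * θ₂ (univGenH τ t j) =
          if i = j then 1 else 0) →
        convMap ΔA θ₁.toLinearMap θ₂.toLinearMap = εA.toLinearMap := by
      intro θ₁ θ₂ hval
      have hLM : convMap ΔA θ₁.toLinearMap θ₂.toLinearMap =
          ((Algebra.TensorProduct.lmul' k).comp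
            ((Algebra.TensorProduct.map θ₁ θ₂).comp ΔA)).toLinearMap := rfl
      rw [hLM]
      congr 1
      refine quot_ext fun i j => ?_
      have h1 : ((Algebra.TensorProduct.lmul' k).comp
          ((Algebra.TensorProduct.map θ₁ θ₂).comp ΔA)) (univGenH τ i j) =
          convMap ΔA θ₁.toLinearMap θ₂.toLinearMap (univGenH τ i j) := rfl
      rw [h1, conv_gen]
      simp only [AlgHom.toLinearMap_apply]
      rw [hval, hε]
    have hval1 : ∀ i j, ∑ t, θ (univGenH τ i t) * θ' (univGenH τ t j) =
        if i = j then 1 else 0 := by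
      intro i j
      have h2 := lin_apply w (winv (Pi.single j 1)) i
      rw [hwr] at h2
      rw [← Pi.single_apply j (1 : k) i, h2]
      refine Finset.sum_congr rfl fun t _ => ?_
      rw [hθg, hθ'g, mul_comm]
    have hval2 : ∀ i j, ∑ t, θ' (univGenH τ i t) * θ (univGenH τ t j) =
        if i = j then 1 else 0 := by
      intro i j
      have h2 := lin_apply winv (w (Pi.single j 1)) i
      rw [hwl] at h2
      rw [← Pi.single_apply j (1 : k) i, h2]
      refine Finset.sum_congr rfl fun t _ => ?_
      rw [hθg, hθ'g, mul_comm]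
    have hγ : gammaMap η θ = w := by
      refine Module.Basis.ext (Pi.basisFun k (Fin n)) fun i => ?_
      rw [Pi.basisFun_apply, part1]
      simp only [hθg]
      exact (pi_single_expand (w (Pi.single i 1))).symm
    refine ⟨θ, ⟨⟨θ', hconv θ θ' hval1, hconv θ' θ hval2⟩, hγ⟩, ?_⟩
    rintro θ₂ ⟨-, hγ₂⟩
    refine quot_ext fun s i => ?_
    calc θ₂ (univGenH τ s i) = gammaMap η θ₂ (Pi.single i 1) s := (gcoord θ₂ s i).symm
      _ = w (Pi.single i 1) s := by rw [hγ₂]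
      _ = gammaMap η θ (Pi.single i 1) s := by rw [hγ]
      _ = θ (univGenH τ s i) := gcoord θ s i
  exact ⟨part1, part2, part3, part4, part5⟩
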